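/- Under the orthogonality setting, the stacked matrix J := [J_x; J_ξ] ∈ ℝ^{n×n} (the block matrix whose first m rows are J_x and last r rows are J_ξ) is invertible, and its inverse is the block matrix [J_x^{#A} | J_ξ^{#A}] whose first m columns are J_x^{#A} and last r columns are J_ξ^{#A}. -/

import Mathlib

open Matrix

/-- The `A`-weighted generalized pseudo-inverse `J^{#A} = A⁻¹ Jᵀ (J A⁻¹ Jᵀ)⁻¹`. -/
noncomputable def weightedPseudoInv {n m : ℕ} (A : Matrix (Fin n) (Fin n) ℝ)
    (J : Matrix (Fin m) (Fin n) ℝ) : Matrix (Fin n) (Fin m) ℝ :=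
  A⁻¹ * Jᵀ * (J * A⁻¹ * Jᵀ)⁻¹

/-!
Each `J^{#A}` is a right inverse of `J`, and since `A⁻¹` is symmetric the orthogonality
`J_x A⁻¹ J_ξᵀ = 0` also gives `J_ξ A⁻¹ J_xᵀ = 0`, so `J_x J_ξ^{#A} = 0` and `J_ξ J_x^{#A} = 0`.
Hence `[J_x; J_ξ] [J_x^{#A} | J_ξ^{#A}]` is the identity, and a one-sided inverse of a square
matrix is its inverse.
-/

namespace Matrix

variable {ι m r R : Type*} [Fintype ι] [DecidableEq ι]

lemma mul_inv_mul_transpose_eq_zero_comm [CommRing R] {A : Matrix ι ι R} (hA : A.IsSymm)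
    {J : Matrix m ι R} {K : Matrix r ι R} (h : J * A⁻¹ * Kᵀ = 0) : K * A⁻¹ * Jᵀ = 0 := by
  simpa [transpose_mul, hA.inv.eq, Matrix.mul_assoc] using congrArg transpose h

lemma submatrix_fromRows_mul_submatrix_fromCols_eq_one [DecidableEq m] [DecidableEq r]
    [Semiring R] (e : ι ≃ m ⊕ r)
    {J : Matrix m ι R} {K : Matrix r ι R} {P : Matrix ι m R} {Q : Matrix ι r R}
    (hJP : J * P = 1) (hJQ : J * Q = 0) (hKP : K * P = 0) (hKQ : K * Q = 1) :
    (fromRows J K).submatrix e id * (fromCols P Q).submatrix id e = 1 := by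
  rw [← submatrix_mul _ _ _ _ _ Function.bijective_id, fromRows_mul_fromCols,
    hJP, hJQ, hKP, hKQ, fromBlocks_one, submatrix_one_equiv]

end Matrix

section weightedPseudoInv

variable {n m k : ℕ} (A : Matrix (Fin n) (Fin n) ℝ)

lemma mul_weightedPseudoInv_self {J : Matrix (Fin m) (Fin n) ℝ}
    (hJ : IsUnit (J * A⁻¹ * Jᵀ)) : J * weightedPseudoInv A J = 1 := by
  rw [weightedPseudoInv, ← Matrix.mul_assoc, ← Matrix.mul_assoc,
    mul_nonsing_inv _ ((isUnit_iff_isUnit_det _).mp hJ)]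

lemma mul_weightedPseudoInv_eq_zero {J : Matrix (Fin m) (Fin n) ℝ} {K : Matrix (Fin k) (Fin n) ℝ}
    (h : K * A⁻¹ * Jᵀ = 0) : K * weightedPseudoInv A J = 0 := by
  rw [weightedPseudoInv, ← Matrix.mul_assoc, ← Matrix.mul_assoc, h, Matrix.zero_mul]

end weightedPseudoInv

/-- In the orthogonality setting (`A` symmetric positive definite,
`Jx Jᵀ`-Gram matrices invertible, `Jx A⁻¹ Jξᵀ = 0`, `m + r = n`), the stacked matrix
`J = [Jx; Jξ]` is invertible with inverse the block matrix `[Jx^{#A} | Jξ^{#A}]`. -/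
theorem stacked_jacobian_inverse {m r : ℕ}
    (A : Matrix (Fin (m + r)) (Fin (m + r)) ℝ) (hA : A.PosDef)
    (Jx : Matrix (Fin m) (Fin (m + r)) ℝ) (Jξ : Matrix (Fin r) (Fin (m + r)) ℝ)
    (hx : IsUnit (Jx * A⁻¹ * Jxᵀ)) (hξ : IsUnit (Jξ * A⁻¹ * Jξᵀ))
    (horth : Jx * A⁻¹ * Jξᵀ = 0) :
    IsUnit ((Matrix.fromRows Jx Jξ).submatrix finSumFinEquiv.symm id) ∧
    ((Matrix.fromRows Jx Jξ).submatrix finSumFinEquiv.symm id)⁻¹ =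
      (Matrix.fromCols (weightedPseudoInv A Jx) (weightedPseudoInv A Jξ)).submatrix
        id finSumFinEquiv.symm := by
  have hA_symm : A.IsSymm := isHermitian_iff_isSymm.mp hA.isHermitian
  have hright := submatrix_fromRows_mul_submatrix_fromCols_eq_one finSumFinEquiv.symm
    (mul_weightedPseudoInv_self A hx) (mul_weightedPseudoInv_eq_zero A horth)
    (mul_weightedPseudoInv_eq_zero A (mul_inv_mul_transpose_eq_zero_comm hA_symm horth))
    (mul_weightedPseudoInv_self A hξ)
  exact ⟨IsUnit.of_mul_eq_one _ hright, inv_eq_right_inv hright⟩
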